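/- (Christoffel–Darboux formula.) Suppose p_0, p_1, p_2, … are real polynomials and (a_j)_{j≥1}, (b_j)_{j≥1}, (c_j)_{j≥2} are reals with a_j ≠ 0 for all j ≥ 1, satisfying p_1 = (a_1 X + b_1)·p_0 and, for every j ≥ 2, p_j = (a_j X + b_j)·p_{j−1} − c_j·p_{j−2} with c_j = a_j / a_{j−1}. Then for every n ≥ 1 and all reals x ≠ y: Σ_{i=0}^{n−1} p_i(x)·p_i(y) = (1/a_n) · (p_n(x)·p_{n−1}(y) − p_{n−1}(x)·p_n(y)) / (x − y). -/

import Mathlib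

/-!
Put `W n = (p n (x) p (n-1) (y) - p (n-1) (x) p n (y)) / a n`. Evaluating the recurrence at `x` and
at `y` and using `c (n+1) / a (n+1) = 1 / a n` gives `W (n+1) = W n + (x - y) p n (x) p n (y)`,
so `W n` telescopes to `(x - y) K_{n-1}(x, y)`. The truncated subtraction `0 - 1 = 0` makes
`W 0 = 0`, so the telescoping starts at `n = 0`.
-/

open Polynomial Finset

namespace ChristoffelDarboux

variable {K : Type*} [Field K] (p : ℕ → K[X]) (a : ℕ → K) (x y : K)

noncomputable def wronskian (n : ℕ) : K :=
  ((p n).eval x * (p (n - 1)).eval y - (p (n - 1)).eval x * (p n).eval y) / a n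

@[simp]
theorem wronskian_zero : wronskian p a x y 0 = 0 := by
  simp [wronskian]

variable {p a}

theorem wronskian_one {b₁ : K} (ha₁ : a 1 ≠ 0) (h₁ : p 1 = (C (a 1) * X + C b₁) * p 0) :
    wronskian p a x y 1 = (x - y) * ((p 0).eval x * (p 0).eval y) := by
  simp only [wronskian, h₁, eval_mul, eval_add, eval_C, eval_X, Nat.sub_self]
  field_simp
  ring

theorem wronskian_succ {n : ℕ} {b : K} (ha : a n ≠ 0) (ha' : a (n + 1) ≠ 0)
    (hrec : p (n + 1) = (C (a (n + 1)) * X + C b) * p n - C (a (n + 1) / a n) * p (n - 1)) :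
    wronskian p a x y (n + 1) =
      wronskian p a x y n + (x - y) * ((p n).eval x * (p n).eval y) := by
  simp only [wronskian, hrec, eval_mul, eval_add, eval_sub, eval_C, eval_X, Nat.add_sub_cancel]
  field_simp
  ring

theorem sub_mul_sum_eval_mul_eval (b c : ℕ → K) (ha : ∀ j, 1 ≤ j → a j ≠ 0)
    (h₁ : p 1 = (C (a 1) * X + C (b 1)) * p 0)
    (hrec : ∀ j, 2 ≤ j → p j = (C (a j) * X + C (b j)) * p (j - 1) - C (c j) * p (j - 2))
    (hc : ∀ j, 2 ≤ j → c j = a j / a (j - 1)) (n : ℕ) :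
    (x - y) * ∑ i ∈ range n, (p i).eval x * (p i).eval y = wronskian p a x y n := by
  induction n with
  | zero => simp
  | succ n ih =>
    rw [sum_range_succ, mul_add, ih]
    rcases Nat.eq_zero_or_pos n with rfl | hn
    · simp [wronskian_one x y (ha 1 le_rfl) h₁]
    · have hrec' := hrec (n + 1) (by omega)
      rw [hc (n + 1) (by omega), Nat.add_sub_cancel, show n + 1 - 2 = n - 1 by omega] at hrec'
      exact (wronskian_succ x y (ha n hn) (ha (n + 1) (by omega)) hrec').symm

end ChristoffelDarboux

theorem stmt_7 (p : ℕ → Polynomial ℝ) (a b c : ℕ → ℝ)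
    (ha : ∀ j, 1 ≤ j → a j ≠ 0)
    (h1 : p 1 = (Polynomial.C (a 1) * Polynomial.X + Polynomial.C (b 1)) * p 0)
    (hrec : ∀ j, 2 ≤ j →
      p j = (Polynomial.C (a j) * Polynomial.X + Polynomial.C (b j)) * p (j - 1) -
        Polynomial.C (c j) * p (j - 2))
    (hc : ∀ j, 2 ≤ j → c j = a j / a (j - 1))
    (n : ℕ) (x y : ℝ) (hxy : x ≠ y) :
    ∑ i ∈ Finset.range n, (p i).eval x * (p i).eval y =
      1 / a n *
        (((p n).eval x * (p (n - 1)).eval y - (p (n - 1)).eval x * (p n).eval y) / (x - y)) := by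
  have hsum := ChristoffelDarboux.sub_mul_sum_eval_mul_eval x y b c ha h1 hrec hc n
  calc ∑ i ∈ Finset.range n, (p i).eval x * (p i).eval y
      = (x - y) * (∑ i ∈ Finset.range n, (p i).eval x * (p i).eval y) / (x - y) :=
        (mul_div_cancel_left₀ _ (sub_ne_zero.mpr hxy)).symm
    _ = _ := by rw [hsum, ChristoffelDarboux.wronskian]; ring
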